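/- arXiv:2105.11318 — 6 statements merged into one kernel-verified Lean document; each statement's English description precedes it below -/
import Mathlib

section
/- If G is a cofinitary subgroup of S_∞ (every non-identity element has only finitely many fixed points) and G is maximal among cofinitary groups, then G is uncountable (in fact not countable). -/
def Cofinitary (G : Subgroup (Equiv.Perm ℕ)) : Prop :=
  ∀ g ∈ G, g ≠ 1 → {n : ℕ | g n = n}.Finite

/-!
Let `G = {e 0, e 1, …}` be a countable cofinitary group. We build `F ∉ G` with `⟨G, F⟩`
cofinitary as a union of finite partial injections: stage `t` defines `F` or `F⁻¹` at one more
point `a`, with a value `b` such that for every `u` among `1, e 0, …, e (t-1)` the point `u b`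
is not used yet, differs from `a`, and differs from `b` unless `u = 1`; all but finitely many
`b` qualify since each `u ≠ 1` has finitely many fixed points. Every element of `⟨G, F⟩` is a
reduced word `w` in `F` with constants in `G`. Once the products of two constants of `w` or
their inverses are among the `e i` seen so far, a stage can create a fixed point of `w` only by
running through its new edge twice, which forces `w = gₖ F^δ u F^(-δ) g₀` with `a` fixed by
the shorter word `u`. By induction on the length, `u` has finitely many fixed points, so only
finitely many stages create a fixed point of `w`, each of them one.
-/

open Equiv Set Filter Pointwise

namespace PEquiv

variable {α : Type*}

def orient (p : α ≃. α) : Bool → α ≃. α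
  | true => p
  | false => p.symm

@[simp] lemma orient_true (p : α ≃. α) : p.orient true = p := rfl
@[simp] lemma orient_false (p : α ≃. α) : p.orient false = p.symm := rfl

lemma orient_eq_some_iff {p : α ≃. α} {ε : Bool} {x y : α} :
    p.orient ε x = some y ↔ p.orient (!ε) y = some x := by
  cases ε <;> simp [eq_some_iff]

@[simp] lemma orient_orient_self (p : α ≃. α) (δ : Bool) : (p.orient δ).orient δ = p := by
  cases δ <;> rfl

lemma orient_orient_of_ne (p : α ≃. α) {δ ε : Bool} (h : ε ≠ δ) :
    (p.orient δ).orient ε = p.symm := by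
  cases δ <;> cases ε <;> simp_all

lemma symm_orient_of_ne (p : α ≃. α) {δ ε : Bool} (h : ε ≠ δ) :
    (p.orient δ).symm = p.orient ε := by
  cases δ <;> cases ε <;> simp_all

lemma orient_mono {p q : α ≃. α} (h : p ≤ q) (ε : Bool) : p.orient ε ≤ q.orient ε := by
  cases ε
  · intro y x hx
    simp only [orient_false, Option.mem_def, eq_some_iff] at hx ⊢
    exact h _ _ hx
  · exact h

lemma orient_toPEquiv (F : Perm α) (ε : Bool) :
    F.toPEquiv.orient ε = (if ε then F else F⁻¹).toPEquiv := by
  cases ε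
  · exact (toPEquiv_symm F).symm
  · rfl

def domRan (p : α ≃. α) : Set α := {x | ∃ ε, p.orient ε x ≠ none}

lemma mem_domRan_of_orient {p : α ≃. α} {ε : Bool} {x y : α} (h : p.orient ε x = some y) :
    x ∈ p.domRan :=
  ⟨ε, by simp [h]⟩

lemma mem_domRan_of_orient' {p : α ≃. α} {ε : Bool} {x y : α} (h : p.orient ε x = some y) :
    y ∈ p.domRan :=
  mem_domRan_of_orient (orient_eq_some_iff.mp h)

def IsFresh (p : α ≃. α) (a b : α) (U : Set (Perm α)) : Prop :=
  ∀ u ∈ U, u b ∉ p.domRan ∧ u b ≠ a ∧ (u ≠ 1 → u b ≠ b)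

lemma finite_setOf_not_isFresh {p : α ≃. α} {U : Set (Perm α)} (a : α) (hp : p.domRan.Finite)
    (hU : U.Finite) (hfix : ∀ u ∈ U, u ≠ 1 → {x | u x = x}.Finite) :
    {b | ¬ p.IsFresh a b U}.Finite := by
  have hfix' : ∀ u ∈ U, {b | u ≠ 1 ∧ u b = b}.Finite := fun u hu => by
    by_cases hu1 : u = 1
    · simp [hu1]
    · exact (hfix u hu hu1).subset fun b hb => hb.2
  refine (hU.biUnion fun u hu =>
    ((hp.insert a).preimage u.injective.injOn).union (hfix' u hu)).subset ?_
  intro b hb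
  simp only [IsFresh, not_forall] at hb
  obtain ⟨u, hu, hb⟩ := hb
  refine mem_biUnion hu ?_
  by_cases h₁ : u b ∈ p.domRan
  · exact Or.inl (mem_insert_of_mem _ h₁)
  by_cases h₂ : u b = a
  · exact Or.inl (h₂ ▸ mem_insert _ _)
  exact Or.inr (by_contra fun h₃ => hb ⟨h₁, h₂, fun hu hub => h₃ ⟨hu, hub⟩⟩)

lemma exists_perm_forall_le {p : ℕ → α ≃. α} (hp : Monotone p)
    (htot : ∀ ε x, ∃ t, (p t).orient ε x ≠ none) : ∃ F : Perm α, ∀ t, p t ≤ F.toPEquiv := by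
  choose T f hf using fun ε x => (htot ε x).imp fun _ => Option.ne_none_iff_exists'.mp
  have key : ∀ {ε x y t}, (p t).orient ε x = some y → f ε x = y := fun {ε x y t} h =>
    Option.some_injective _ <|
      ((orient_mono (hp (le_max_right t (T ε x))) ε) _ _ (hf ε x)).symm.trans
        ((orient_mono (hp (le_max_left t (T ε x))) ε) _ _ h)
  refine ⟨⟨f true, f false, fun x => key (orient_eq_some_iff.mp (hf true x)),
    fun x => key (orient_eq_some_iff.mp (hf false x))⟩, fun t x y h => ?_⟩
  exact congrArg some (key (ε := true) h)

variable [DecidableEq α]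

def extend (p : α ≃. α) (a b : α) (ha : p a = none) (hb : p.symm b = none) : α ≃. α where
  toFun x := if x = a then some b else p x
  invFun y := if y = b then some a else p.symm y
  inv x y := by
    have := p.eq_some_iff (a := x) (b := y)
    change (if y = b then some a else p.symm y) = some x ↔ (if x = a then some b else p x) = some y
    split_ifs <;> grind

@[simp] lemma extend_apply (p : α ≃. α) (a b : α) (ha hb) (x : α) :
    p.extend a b ha hb x = if x = a then some b else p x := rfl

@[simp] lemma symm_extend_apply (p : α ≃. α) (a b : α) (ha hb) (y : α) :
    (p.extend a b ha hb).symm y = if y = b then some a else p.symm y := rfl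

lemma le_extend (p : α ≃. α) (a b : α) (ha hb) : p ≤ p.extend a b ha hb := by
  intro x y (h : p x = some y)
  have hx : x ≠ a := by rintro rfl; simp [ha] at h
  simpa [hx] using h

/-- Adds the edge `a ↦ b` to `p.orient δ`, if there is room for it. -/
noncomputable def addEdge (p : α ≃. α) (δ : Bool) (a b : α) : α ≃. α :=
  if h : p.orient δ a = none ∧ (p.orient δ).symm b = none then
    ((p.orient δ).extend a b h.1 h.2).orient δ
  else p

variable {p : α ≃. α} {δ : Bool} {a b : α}

lemma le_addEdge : p ≤ p.addEdge δ a b := by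
  unfold addEdge
  split_ifs with h
  · simpa using orient_mono (le_extend (p.orient δ) a b h.1 h.2) δ
  · exact le_rfl

lemma orient_addEdge_eq_some {ε : Bool} {x y : α} (hxy : (p.addEdge δ a b).orient ε x = some y) :
    p.orient ε x = some y ∨ (ε = δ ∧ x = a ∧ y = b) ∨ (ε ≠ δ ∧ x = b ∧ y = a) := by
  unfold addEdge at hxy
  split_ifs at hxy with h
  · rcases eq_or_ne ε δ with rfl | hne
    · rw [orient_orient_self, extend_apply] at hxy
      split_ifs at hxy <;> grind
    · rw [orient_orient_of_ne _ hne, symm_extend_apply, symm_orient_of_ne _ hne] at hxy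
      split_ifs at hxy <;> grind
  · exact Or.inl hxy

lemma orient_addEdge_ne_none (hb : b ∉ p.domRan) : (p.addEdge δ a b).orient δ a ≠ none := by
  unfold addEdge
  split_ifs with h
  · simp
  · have hb' : (p.orient δ).symm b = none := by
      rw [symm_orient_of_ne p (Bool.not_ne_self δ)]
      simp only [domRan, mem_ofPred_eq, not_exists, not_not] at hb
      exact hb _
    tauto

lemma domRan_addEdge_subset : (p.addEdge δ a b).domRan ⊆ insert a (insert b p.domRan) := by
  rintro x ⟨ε, hx⟩
  obtain ⟨y, hy⟩ := Option.ne_none_iff_exists'.mp hx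
  rcases orient_addEdge_eq_some hy with h | ⟨-, rfl, -⟩ | ⟨-, rfl, -⟩
  · exact mem_insert_of_mem _ (mem_insert_of_mem _ (mem_domRan_of_orient h))
  · exact mem_insert _ _
  · exact mem_insert_of_mem _ (mem_insert _ _)

end PEquiv

open PEquiv

/-- `[(ε₁, g₁), …, (εₖ, gₖ)]` stands for `gₖ F^(±1) ⋯ g₁ F^(±1)`, where the `i`-th sign is `+`
exactly when `εᵢ = true`, for a permutation `F` that is being constructed. -/
abbrev Letters (α : Type*) := List (Bool × Perm α)

namespace Letters

variable {α : Type*}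

def IsReduced (l : Letters α) : Prop :=
  l.IsChain fun s t => s.2 = 1 → t.1 = s.1

def eval (p : α ≃. α) : Letters α → α → Option α
  | [], x => some x
  | (ε, g) :: l, x => (p.orient ε x).bind fun y => eval p l (g y)

def toPerm (F : Perm α) : Letters α → Perm α
  | [] => 1
  | (ε, g) :: l => toPerm F l * g * if ε then F else F⁻¹

variable {p q : α ≃. α} {ε δ : Bool} {g g₁ gk : Perm α} {l l₁ : Letters α} {x z : α}

lemma eval_cons_eq_some :
    eval p ((ε, g) :: l) x = some z ↔ ∃ y, p.orient ε x = some y ∧ eval p l (g y) = some z :=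
  Option.bind_eq_some_iff

lemma eval_mono (h : p ≤ q) : ∀ {l : Letters α} {x z : α}, eval p l x = some z → eval q l x = some z
  | [], _, _, hx => hx
  | (_, _) :: _, _, _, hx => by
    obtain ⟨y, hy, hz⟩ := eval_cons_eq_some.mp hx
    exact eval_cons_eq_some.mpr ⟨y, orient_mono h _ _ _ hy, eval_mono h hz⟩

lemma eval_toPEquiv (F : Perm α) :
    ∀ (l : Letters α) (x : α), eval F.toPEquiv l x = some (toPerm F l x)
  | [], _ => rfl
  | (ε, g) :: l, x => by
    rw [eval_cons_eq_some]
    refine ⟨_, by rw [orient_toPEquiv, toPEquiv_apply], ?_⟩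
    rw [eval_toPEquiv F l]
    rfl

lemma eventually_eval_eq_toPerm {p : ℕ → α ≃. α} (hp : Monotone p)
    (htot : ∀ ε x, ∃ t, (p t).orient ε x ≠ none) {F : Perm α} (hF : ∀ t, p t ≤ F.toPEquiv) :
    ∀ (l : Letters α) (x : α), ∀ᶠ t in atTop, l.eval (p t) x = some (l.toPerm F x)
  | [], _ => Eventually.of_forall fun _ => rfl
  | (ε, g) :: l, x => by
    obtain ⟨t₀, ht₀⟩ := htot ε x
    obtain ⟨y, hy⟩ := Option.ne_none_iff_exists'.mp ht₀
    have hyF : (if ε then F else F⁻¹) x = y := by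
      simpa [orient_toPEquiv] using orient_mono (hF t₀) ε x y hy
    filter_upwards [eventually_ge_atTop t₀, eventually_eval_eq_toPerm hp htot hF l (g y)]
      with t ht h
    refine eval_cons_eq_some.mpr ⟨y, orient_mono (hp ht) ε x y hy, ?_⟩
    rw [h, ← hyF]
    rfl

lemma mem_domRan_of_eval (hl : l ≠ []) (h : eval p l x = some z) : x ∈ p.domRan := by
  obtain ⟨⟨ε, g⟩, l, rfl⟩ := List.exists_cons_of_ne_nil hl
  obtain ⟨y, hy, -⟩ := eval_cons_eq_some.mp h
  exact mem_domRan_of_orient hy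

lemma exists_inv_mem_domRan_of_eval :
    ∀ {l : Letters α} {x z : α}, l ≠ [] → eval p l x = some z →
      ∃ ε g, (ε, g) ∈ l ∧ g⁻¹ z ∈ p.domRan
  | [], _, _, hl, _ => absurd rfl hl
  | (ε, g) :: l, x, z, _, h => by
    obtain ⟨y, hy, hz⟩ := eval_cons_eq_some.mp h
    rcases eq_or_ne l [] with rfl | hl
    · cases hz
      exact ⟨ε, g, List.mem_cons_self, by simpa using mem_domRan_of_orient' hy⟩
    · obtain ⟨ε', g', hmem, h'⟩ := exists_inv_mem_domRan_of_eval hl hz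
      exact ⟨ε', g', List.mem_cons_of_mem _ hmem, h'⟩

lemma cons_append_singleton_inj {δ' : Bool} {g₁' gk' : Perm α} {l₁' : Letters α}
    (h : ((!δ, g₁) :: (l₁ ++ [(δ, gk)]) : Letters α) = (!δ', g₁') :: (l₁' ++ [(δ', gk')])) :
    δ = δ' ∧ g₁ = g₁' ∧ l₁ = l₁' ∧ gk = gk' := by
  simp only [List.cons.injEq, Prod.mk.injEq, Bool.not_eq_eq_eq_not, Bool.not_not,
    List.append_singleton_inj] at h
  tauto

lemma IsReduced.inner (h : IsReduced ((!δ, g₁) :: (l₁ ++ [(δ, gk)]))) :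
    l₁.IsReduced ∧ (l₁ ≠ [] ∨ g₁ ≠ 1) := by
  refine ⟨h.infix ⟨[(!δ, g₁)], [(δ, gk)], by simp⟩, ?_⟩
  rcases eq_or_ne l₁ [] with rfl | hl₁
  · exact Or.inr fun hg₁ => by simpa using (List.isChain_cons_cons.mp h).1 hg₁
  · exact Or.inl hl₁

variable [DecidableEq α] {a b : α} {U : Set (Perm α)}

/-- Leaving the fresh point `b` by a letter leads to a point where no edge starts, so the new
edge can only be the last step. -/
lemma eval_addEdge_eq_some (hfresh : p.IsFresh a b U) (hl : IsReduced l)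
    (hU : ∀ ε g, (ε, g) ∈ l → g ∈ U ∧ g⁻¹ ∈ U) (hx : x ≠ b)
    (h : eval (p.addEdge δ a b) l x = some z) :
    eval p l x = some z ∨ ∃ l₁ g, l = l₁ ++ [(δ, g)] ∧ eval p l₁ x = some a ∧ z = g b := by
  induction l generalizing x with
  | nil => exact Or.inl h
  | cons ℓ l ih =>
    obtain ⟨ε, g⟩ := ℓ
    obtain ⟨y, hy, hz⟩ := eval_cons_eq_some.mp h
    have hg := hU ε g List.mem_cons_self
    rcases orient_addEdge_eq_some hy with hy' | ⟨rfl, rfl, rfl⟩ | ⟨-, rfl, -⟩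
    · have hgy : g y ≠ b := fun hgy =>
        (hfresh g⁻¹ hg.2).1 (by simpa [← hgy] using mem_domRan_of_orient' hy')
      rcases ih hl.tail (fun ε' g' h' => hU ε' g' (List.mem_cons_of_mem _ h')) hgy hz with
        h' | ⟨l₁, g', rfl, h₁, rfl⟩
      · exact Or.inl (eval_cons_eq_some.mpr ⟨y, hy', h'⟩)
      · exact Or.inr ⟨(ε, g) :: l₁, g', rfl, eval_cons_eq_some.mpr ⟨y, hy', h₁⟩, rfl⟩
    · right
      cases l with
      | nil => exact ⟨[], g, rfl, rfl, by cases hz; rfl⟩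
      | cons ℓ l =>
        exfalso
        obtain ⟨ε', g'⟩ := ℓ
        obtain ⟨y', hy', -⟩ := eval_cons_eq_some.mp hz
        have hgb := hfresh g hg.1
        rcases orient_addEdge_eq_some hy' with h' | ⟨-, h', -⟩ | ⟨hne, h', -⟩
        · exact hgb.1 (mem_domRan_of_orient h')
        · exact hgb.2.1 h'
        · by_cases hg1 : g = 1
          · exact hne ((List.isChain_cons_cons.mp hl).1 hg1)
          · exact hgb.2.2 hg1 h'
    · exact absurd rfl hx

end Letters

structure Word (α : Type*) where
  head : Perm α
  letters : Letters α

namespace Word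

variable {α : Type*}

def eval (p : α ≃. α) (w : Word α) (x : α) : Option α := w.letters.eval p (w.head x)

def toPerm (F : Perm α) (w : Word α) : Perm α := w.letters.toPerm F * w.head

def consts (w : Word α) : Set (Perm α) := insert w.head {g | ∃ ε, (ε, g) ∈ w.letters}

def signedConsts (w : Word α) : Set (Perm α) := insert 1 (w.consts ∪ w.consts⁻¹)

/-- The `u` for which the values `u b` at a new edge `a ↦ b` must be fresh, for the edge not to
create unexpected fixed points of `w`. -/
def guard (w : Word α) : Set (Perm α) := w.signedConsts * w.signedConsts

variable {w : Word α}

lemma eval_toPEquiv (F : Perm α) (x : α) : w.eval F.toPEquiv x = some (w.toPerm F x) :=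
  Letters.eval_toPEquiv F _ _

lemma toPerm_apply_of_eval {p : α ≃. α} {F : Perm α} (hF : p ≤ F.toPEquiv) {x y : α}
    (h : w.eval p x = some y) : w.toPerm F x = y :=
  Option.some_injective _ ((eval_toPEquiv F x).symm.trans (Letters.eval_mono hF h))

lemma finite_setOf_eval_eq_self {p : α ≃. α} (hl : w.letters ≠ []) (hp : p.domRan.Finite) :
    {x | w.eval p x = some x}.Finite :=
  (hp.preimage w.head.injective.injOn).subset fun _ hx => Letters.mem_domRan_of_eval hl hx

lemma head_mem_consts : w.head ∈ w.consts := mem_insert _ _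

lemma mem_consts_of_mem {ε : Bool} {g : Perm α} (h : (ε, g) ∈ w.letters) : g ∈ w.consts :=
  mem_insert_of_mem _ ⟨ε, h⟩

lemma consts_inner_subset {δ : Bool} {g₁ gk : Perm α} {l₁ : Letters α}
    (h : w.letters = (!δ, g₁) :: (l₁ ++ [(δ, gk)])) : (⟨g₁, l₁⟩ : Word α).consts ⊆ w.consts := by
  rintro g (rfl | ⟨ε, hg⟩)
  · exact mem_consts_of_mem (ε := !δ) (by simp [h])
  · exact mem_consts_of_mem (ε := ε) (by simp [h, hg])

lemma one_mem_signedConsts : 1 ∈ w.signedConsts := mem_insert _ _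

lemma mem_signedConsts {g : Perm α} (h : g ∈ w.consts) : g ∈ w.signedConsts :=
  mem_insert_of_mem _ (Or.inl h)

lemma inv_mem_signedConsts {g : Perm α} (h : g ∈ w.consts) : g⁻¹ ∈ w.signedConsts :=
  mem_insert_of_mem _ (Or.inr (by simpa using h))

lemma mul_mem_guard {c d : Perm α} (hc : c ∈ w.signedConsts) (hd : d ∈ w.signedConsts) :
    c * d ∈ w.guard :=
  mul_mem_mul hc hd

lemma mem_guard {g : Perm α} (hg : g ∈ w.signedConsts) : g ∈ w.guard := by
  simpa using mul_mem_guard hg one_mem_signedConsts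

lemma finite_guard (w : Word α) : w.guard.Finite := by
  have hc : w.consts.Finite :=
    ((w.letters.finite_toSet.image Prod.snd).insert w.head).subset
      (insert_subset_insert fun g ⟨ε, h⟩ => ⟨(ε, g), h, rfl⟩)
  have hs : w.signedConsts.Finite := (hc.union hc.inv).insert 1
  exact hs.mul hs

lemma guard_subset {G : Subgroup (Perm α)} (h : w.consts ⊆ G) : w.guard ⊆ G := by
  have hs : w.signedConsts ⊆ G := by
    rintro g (rfl | hg | hg)
    · exact G.one_mem
    · exact h hg
    · simpa using G.inv_mem (h hg)
  rintro _ ⟨c, hc, d, hd, rfl⟩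
  exact G.mul_mem (hs hc) (hs hd)

lemma mem_guard_of_mem {ε : Bool} {g : Perm α} (h : (ε, g) ∈ w.letters) :
    g ∈ w.guard ∧ g⁻¹ ∈ w.guard :=
  ⟨mem_guard (mem_signedConsts (mem_consts_of_mem h)),
    mem_guard (inv_mem_signedConsts (mem_consts_of_mem h))⟩

section AddEdge

variable [DecidableEq α] {p : α ≃. α} {δ : Bool} {a b : α}

lemma eval_addEdge_eq_self_of_head_ne (hfresh : p.IsFresh a b w.guard)
    (hw : w.letters.IsReduced) {x : α} (hxb : w.head x ≠ b)
    (hx : w.eval (p.addEdge δ a b) x = some x) : w.eval p x = some x := by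
  obtain ⟨g₀, l⟩ := w
  rcases Letters.eval_addEdge_eq_some hfresh hw (fun _ _ h => mem_guard_of_mem h) hxb hx with
    h | ⟨l₁, gk, rfl, h₁, rfl⟩
  · exact h
  · have hgk : gk ∈ consts ⟨g₀, l₁ ++ [(δ, gk)]⟩ := mem_consts_of_mem (ε := δ) (by simp)
    have := hfresh _ (mul_mem_guard (mem_signedConsts head_mem_consts) (mem_signedConsts hgk))
    rcases eq_or_ne l₁ [] with rfl | hl
    · cases h₁
      exact absurd rfl this.2.1
    · exact absurd (Letters.mem_domRan_of_eval hl h₁) this.1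

/-- A new fixed point has to run through the new edge twice: backwards first, forwards last. -/
lemma exists_conj_form_of_eval_addEdge (hfresh : p.IsFresh a b w.guard)
    (hw : w.letters.IsReduced) {x : α} (hx : w.eval (p.addEdge δ a b) x = some x)
    (hx' : w.eval p x ≠ some x) :
    ∃ g₁ l₁ gk, w.letters = (!δ, g₁) :: (l₁ ++ [(δ, gk)]) ∧ x = gk b ∧
      (⟨g₁, l₁⟩ : Word α).eval p a = some a := by
  rcases ne_or_eq (w.head x) b with hxb | hxb
  · exact absurd (eval_addEdge_eq_self_of_head_ne hfresh hw hxb hx) hx'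
  obtain ⟨g₀, l⟩ := w
  have hl : l ≠ [] := by rintro rfl; exact hx' hx
  obtain ⟨⟨ε₁, g₁⟩, l, rfl⟩ := List.exists_cons_of_ne_nil hl
  have h₀ := head_mem_consts (w := ⟨g₀, (ε₁, g₁) :: l⟩)
  have hg₁ : g₁ ∈ consts ⟨g₀, (ε₁, g₁) :: l⟩ := mem_consts_of_mem List.mem_cons_self
  have hb : b ∉ p.domRan ∧ b ≠ a := by simpa using hfresh 1 (mem_guard one_mem_signedConsts)
  obtain ⟨y, hy, hz⟩ := Letters.eval_cons_eq_some.mp hx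
  rw [hxb] at hy
  rcases orient_addEdge_eq_some hy with h | ⟨-, h, -⟩ | ⟨hne, -, rfl⟩
  · exact absurd (mem_domRan_of_orient h) hb.1
  · exact absurd h hb.2
  have hg₁a : g₁ y ≠ b := fun h =>
    (hfresh _ (mem_guard (inv_mem_signedConsts hg₁))).2.1 (by simp [← h])
  rcases Letters.eval_addEdge_eq_some hfresh hw.tail
      (fun _ _ h => mem_guard_of_mem (List.mem_cons_of_mem _ h)) hg₁a hz with
    h | ⟨l₁, gk, rfl, h₁, rfl⟩
  · exfalso
    rcases eq_or_ne l [] with rfl | hl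
    · cases h
      exact (hfresh _ (mul_mem_guard (inv_mem_signedConsts hg₁)
        (inv_mem_signedConsts h₀))).2.1 (by simp [← hxb])
    · obtain ⟨ε, g, hg, h⟩ := Letters.exists_inv_mem_domRan_of_eval hl h
      have hg' : g ∈ consts ⟨g₀, (ε₁, g₁) :: l⟩ := mem_consts_of_mem (List.mem_cons_of_mem _ hg)
      exact (hfresh _ (mul_mem_guard (inv_mem_signedConsts hg')
        (inv_mem_signedConsts h₀))).1 (by simpa [← hxb] using h)
  · exact ⟨g₁, l₁, gk, by rw [Bool.eq_not.mpr hne], rfl, h₁⟩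

end AddEdge

lemma exists_toPerm_eq_mul_letter {G : Subgroup (Perm α)} {F : Perm α} (hc : w.consts ⊆ G)
    (hw : w.letters.IsReduced) (ε : Bool) :
    ∃ w' : Word α, w'.consts ⊆ G ∧ w'.letters.IsReduced ∧
      w'.toPerm F = w.toPerm F * if ε then F else F⁻¹ := by
  obtain ⟨g₀, l⟩ := w
  by_cases hcancel : ∃ g l', g₀ = 1 ∧ l = (!ε, g) :: l'
  · obtain ⟨g, l', rfl, rfl⟩ := hcancel
    refine ⟨⟨g, l'⟩, ?_, hw.tail, ?_⟩
    · rintro c (rfl | ⟨ε', hc'⟩)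
      · exact hc (mem_consts_of_mem List.mem_cons_self)
      · exact hc (mem_consts_of_mem (List.mem_cons_of_mem _ hc'))
    · cases ε <;> simp [toPerm, Letters.toPerm, mul_assoc]
  · refine ⟨⟨1, (ε, g₀) :: l⟩, ?_, ?_, ?_⟩
    · rintro c (rfl | ⟨ε', hc'⟩)
      · exact G.one_mem
      · rcases List.mem_cons.mp hc' with h | h
        · cases h; exact hc head_mem_consts
        · exact hc (mem_consts_of_mem h)
    · cases l with
      | nil => exact List.isChain_singleton _
      | cons ℓ l =>
        refine List.isChain_cons_cons.mpr ⟨fun (h : g₀ = 1) => ?_, hw⟩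
        obtain ⟨ε', g⟩ := ℓ
        by_contra hne
        have hε : ε' = !ε := Bool.eq_not.mpr hne
        exact hcancel ⟨g, l, h, by rw [hε]⟩
    · simp [toPerm, Letters.toPerm, mul_assoc]

lemma exists_toPerm_eq_mul_of_mem {G : Subgroup (Perm α)} {F g : Perm α} (hc : w.consts ⊆ G)
    (hw : w.letters.IsReduced) (hg : g ∈ G) :
    ∃ w' : Word α, w'.consts ⊆ G ∧ w'.letters.IsReduced ∧ w'.toPerm F = w.toPerm F * g := by
  refine ⟨⟨w.head * g, w.letters⟩, ?_, hw, by simp [toPerm, mul_assoc]⟩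
  rintro c (rfl | hc')
  · exact G.mul_mem (hc head_mem_consts) hg
  · exact hc (mem_insert_of_mem _ hc')

lemma exists_toPerm_eq_of_mem_closure {G : Subgroup (Perm α)} {F h : Perm α}
    (hh : h ∈ Subgroup.closure (insert F (G : Set (Perm α)))) :
    ∃ w : Word α, w.consts ⊆ G ∧ w.letters.IsReduced ∧ w.toPerm F = h := by
  induction hh using Subgroup.closure_induction_right with
  | one =>
    refine ⟨⟨1, []⟩, ?_, List.isChain_nil, rfl⟩
    rintro c (rfl | ⟨_, ⟨⟩⟩)
    exact G.one_mem
  | mul_right x _ y hy ih =>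
    obtain ⟨w, hc, hw, rfl⟩ := ih
    rcases hy with rfl | hy
    · simpa using exists_toPerm_eq_mul_letter (F := y) hc hw true
    · exact exists_toPerm_eq_mul_of_mem hc hw hy
  | mul_inv_cancel x _ y hy ih =>
    obtain ⟨w, hc, hw, rfl⟩ := ih
    rcases hy with rfl | hy
    · simpa using exists_toPerm_eq_mul_letter (F := y) hc hw false
    · exact exists_toPerm_eq_mul_of_mem hc hw (G.inv_mem hy)

end Word

lemma Nat.mem_or_exists_mem_succ_notMem {β : Type*} (S : ℕ → Set β) {T t : ℕ} (ht : T ≤ t)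
    {x : β} (hx : x ∈ S t) : x ∈ S T ∨ ∃ s, T ≤ s ∧ x ∈ S (s + 1) ∧ x ∉ S s := by
  induction t, ht using Nat.le_induction with
  | base => exact Or.inl hx
  | succ t hTt ih =>
    by_cases h : x ∈ S t
    · exact ih h
    · exact Or.inr ⟨t, hTt, hx, h⟩

namespace Cofinitary

section Construction

variable (e : ℕ → Perm ℕ)

def guardAt (t : ℕ) : Set (Perm ℕ) := insert 1 (e '' Iio t)

def task : ℕ ≃ Bool × ℕ := boolProdNatEquivNat.symm

noncomputable def freshValue (p : ℕ ≃. ℕ) (t : ℕ) : ℕ :=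
  Classical.epsilon fun b => p.IsFresh (task t).2 b (guardAt e t)

/-- Stage `t + 1` makes `F ^ δ` defined at `a`, where `(δ, a) = task t`. -/
noncomputable def stage : ℕ → ℕ ≃. ℕ
  | 0 => ⊥
  | t + 1 => (stage t).addEdge (task t).1 (task t).2 (freshValue e (stage t) t)

lemma stage_mono : Monotone (stage e) :=
  monotone_nat_of_le_succ fun _ => le_addEdge

lemma finite_domRan_stage : ∀ t, (stage e t).domRan.Finite
  | 0 => by simp [stage, domRan]
  | t + 1 => (((finite_domRan_stage t).insert _).insert _).subset domRan_addEdge_subset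

lemma guardAt_mono : Monotone (guardAt e) :=
  fun _ _ h => insert_subset_insert (image_mono (Iio_subset_Iio h))

lemma exists_subset_guardAt {s : Set (Perm ℕ)} (hs : s.Finite) (hse : s ⊆ range e) :
    ∃ T, s ⊆ guardAt e T := by
  choose f hf using fun u : s => hse u.2
  have : Finite s := hs.to_subtype
  obtain ⟨N, hN⟩ := (finite_range f).bddAbove
  exact ⟨N + 1, fun u hu => mem_insert_of_mem _
    ⟨f ⟨u, hu⟩, Nat.lt_succ_of_le (hN (mem_range_self _)), hf ⟨u, hu⟩⟩⟩

variable {G : Subgroup (Perm ℕ)}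

lemma isFresh_freshValue (hG : Cofinitary G) (he : range e = G) (t : ℕ) :
    (stage e t).IsFresh (task t).2 (freshValue e (stage e t) t) (guardAt e t) := by
  have hfix : ∀ u ∈ guardAt e t, u ≠ 1 → {x | u x = x}.Finite := by
    rintro u (rfl | ⟨n, -, rfl⟩) hu
    · exact absurd rfl hu
    · exact hG _ (he.subset (mem_range_self n)) hu
  obtain ⟨b, hb⟩ := (finite_setOf_not_isFresh (task t).2 (finite_domRan_stage e t)
    (((finite_Iio t).image e).insert 1) hfix).exists_notMem
  exact Classical.epsilon_spec (p := fun b => IsFresh _ _ b _) ⟨b, not_not.mp hb⟩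

lemma exists_orient_stage_ne_none (hG : Cofinitary G) (he : range e = G) (ε : Bool) (x : ℕ) :
    ∃ t, (stage e t).orient ε x ≠ none := by
  refine ⟨task.symm (ε, x) + 1, ?_⟩
  have h := orient_addEdge_ne_none (p := stage e (task.symm (ε, x)))
    (δ := (task (task.symm (ε, x))).1) (a := (task (task.symm (ε, x))).2)
    (by simpa using (isFresh_freshValue e hG he _ 1 (mem_insert _ _)).1)
  simpa [stage] using h

lemma eval_stage_eq_self_or_exists_conj_form {F : Perm ℕ} (hG : Cofinitary G)
    (he : range e = G) (hF : ∀ t, stage e t ≤ F.toPEquiv) {w : Word ℕ}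
    (hw : w.letters.IsReduced) {T : ℕ} (hT : w.guard ⊆ guardAt e T) {x : ℕ}
    (hx : w.toPerm F x = x) :
    w.eval (stage e T) x = some x ∨ ∃ t g₁ l₁ gk,
      w.letters = (!(task t).1, g₁) :: (l₁ ++ [((task t).1, gk)]) ∧
      x = gk (freshValue e (stage e t) t) ∧
      (⟨g₁, l₁⟩ : Word ℕ).toPerm F (task t).2 = (task t).2 := by
  obtain ⟨t, hTt, ht⟩ := ((eventually_ge_atTop T).and (Letters.eventually_eval_eq_toPerm
    (stage_mono e) (exists_orient_stage_ne_none e hG he) hF w.letters (w.head x))).exists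
  rcases Nat.mem_or_exists_mem_succ_notMem (fun t => {x | w.eval (stage e t) x = some x}) hTt
      (show w.eval (stage e t) x = some x from ht.trans (congrArg some hx)) with
    h | ⟨s, hTs, hs, hs'⟩
  · exact Or.inl h
  · obtain ⟨g₁, l₁, gk, hl, rfl, h⟩ := Word.exists_conj_form_of_eval_addEdge
      (fun u hu => isFresh_freshValue e hG he s u (hT.trans (guardAt_mono e hTs) hu)) hw hs hs'
    exact Or.inr ⟨s, g₁, l₁, gk, hl, rfl, Word.toPerm_apply_of_eval (hF s) h⟩

end Construction

theorem finite_fixedPoints_toPerm {e : ℕ → Perm ℕ} {G : Subgroup (Perm ℕ)} {F : Perm ℕ}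
    (hG : Cofinitary G) (he : range e = G) (hF : ∀ t, stage e t ≤ F.toPEquiv) (w : Word ℕ)
    (hc : w.consts ⊆ G) (hw : w.letters.IsReduced) (hne : w.letters ≠ [] ∨ w.head ≠ 1) :
    {x | w.toPerm F x = x}.Finite := by
  rcases eq_or_ne w.letters [] with hl | hl
  · have hw₀ : w.toPerm F = w.head := by simp [Word.toPerm, hl, Letters.toPerm]
    rw [hw₀]
    exact hG _ (hc Word.head_mem_consts) (hne.resolve_left (not_not.mpr hl))
  obtain ⟨T, hT⟩ := exists_subset_guardAt e w.finite_guard (he ▸ w.guard_subset hc)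
  have hfinT := Word.finite_setOf_eval_eq_self hl (finite_domRan_stage e T)
  by_cases hpat : ∃ δ g₁ l₁ gk, w.letters = (!δ, g₁) :: (l₁ ++ [(δ, gk)])
  · obtain ⟨δ, g₁, l₁, gk, hpat⟩ := hpat
    have hinner := (hpat ▸ hw).inner
    have hA : {x | (⟨g₁, l₁⟩ : Word ℕ).toPerm F x = x}.Finite :=
      finite_fixedPoints_toPerm hG he hF ⟨g₁, l₁⟩ ((Word.consts_inner_subset hpat).trans hc)
        hinner.1 hinner.2
    refine (hfinT.union (((finite_univ.prod hA).preimage task.injective.injOn).image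
      fun t => gk (freshValue e (stage e t) t))).subset fun x hx => ?_
    rcases eval_stage_eq_self_or_exists_conj_form e hG he hF hw hT hx with
      h | ⟨t, g₁', l₁', gk', hpat', rfl, h⟩
    · exact Or.inl h
    · obtain ⟨-, rfl, rfl, rfl⟩ := Letters.cons_append_singleton_inj (hpat.symm.trans hpat')
      exact Or.inr ⟨t, ⟨trivial, h⟩, rfl⟩
  · refine hfinT.subset fun x hx => ?_
    rcases eval_stage_eq_self_or_exists_conj_form e hG he hF hw hT hx with
      h | ⟨t, g₁, l₁, gk, hpat', -⟩
    · exact h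
    · exact absurd ⟨_, g₁, l₁, gk, hpat'⟩ hpat
termination_by w.letters.length
decreasing_by simp [hpat]

theorem exists_notMem_cofinitary_closure_insert {G : Subgroup (Perm ℕ)} (hG : Cofinitary G)
    (hc : (G : Set (Perm ℕ)).Countable) :
    ∃ F ∉ G, Cofinitary (Subgroup.closure (insert F (G : Set (Perm ℕ)))) := by
  obtain ⟨e, he⟩ := hc.exists_eq_range ⟨1, G.one_mem⟩
  obtain ⟨F, hF⟩ := exists_perm_forall_le (stage_mono e)
    (exists_orient_stage_ne_none e hG he.symm)
  have hfin := finite_fixedPoints_toPerm hG he.symm hF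
  refine ⟨F, fun hFG => ?_, fun h hh hne => ?_⟩
  · have hc : (⟨F⁻¹, [(true, 1)]⟩ : Word ℕ).consts ⊆ G := by
      rintro g (rfl | ⟨ε, hg⟩)
      · exact G.inv_mem hFG
      · cases List.mem_singleton.mp hg
        exact G.one_mem
    refine infinite_univ (α := ℕ) ?_
    simpa [Word.toPerm, Letters.toPerm] using
      hfin _ hc (List.isChain_singleton _) (Or.inl (List.cons_ne_nil _ _))
  · obtain ⟨w, hc, hw, rfl⟩ := Word.exists_toPerm_eq_of_mem_closure hh
    refine hfin w hc hw (not_and_or.mp fun ⟨hl, h1⟩ => hne ?_)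
    simp [Word.toPerm, hl, h1, Letters.toPerm]

end Cofinitary

theorem stmt0 (G : Subgroup (Equiv.Perm ℕ)) (hG : Cofinitary G)
    (hmax : ∀ H : Subgroup (Equiv.Perm ℕ), Cofinitary H → G ≤ H → G = H) :
    ¬ (G : Set (Equiv.Perm ℕ)).Countable := by
  intro hc
  obtain ⟨F, hFG, hcof⟩ := hG.exists_notMem_cofinitary_closure_insert hc
  have hGH : G ≤ Subgroup.closure (insert F (G : Set (Perm ℕ))) :=
    fun g hg => Subgroup.subset_closure (mem_insert_of_mem _ hg)
  exact hFG ((hmax _ hcof hGH).symm ▸ Subgroup.subset_closure (mem_insert F _))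
end

section
/- Let (I_n) be a partition of ℕ into consecutive finite intervals, let G_n ≤ S(I_n), and let c_n : F({0,1}^n) → G_n be group homomorphisms such that c_n is injective on the set W_n of reduced words of length at most n. Define ρ : F({0,1}^ℕ) → S_∞ on each generator x ∈ {0,1}^ℕ by ρ(x) ↾ I_n = c_n(x ↾ n) (restriction of the infinite binary sequence to its first n bits), where each c_n ∘ r_n is the composition with the restriction homomorphism r_n : F({0,1}^ℕ) → F({0,1}^n). Then ρ is an injective group homomorphism. -/
/-!
If `ρ w = 1` with `w ≠ 1`, take `n` at least the length of `w` and so large that truncation to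
the first `n` bits separates the finitely many letters of `w`. Then `r_n w` is still a nontrivial
word of length at most `n`, so `c_n (r_n w) ≠ 1` by injectivity of `c_n` on `W_n`; but `ρ w`
acts on `I_n` as `c_n (r_n w)`.
-/

open Filter

namespace FreeGroup

variable {α β : Type*} [DecidableEq α]

def letters (w : FreeGroup α) : Set α :=
  Prod.fst '' {p | p ∈ w.toWord}

theorem letters_finite (w : FreeGroup α) : w.letters.Finite :=
  (List.finite_toSet _).image _

theorem map_eq_mk_map_toWord (f : α → β) (w : FreeGroup α) :
    map f w = mk (w.toWord.map fun p => (f p.1, p.2)) := by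
  conv_lhs => rw [← mk_toWord (x := w)]
  exact map.mk

theorem norm_map_le [DecidableEq β] (f : α → β) (w : FreeGroup α) : (map f w).norm ≤ w.norm := by
  rw [map_eq_mk_map_toWord]
  exact norm_mk_le.trans (List.length_map _).le

theorem map_eq_self_of_eqOn_letters {h : α → α} {w : FreeGroup α}
    (hh : Set.EqOn h id w.letters) : map h w = w := by
  conv_rhs => rw [← mk_toWord (x := w)]
  rw [map_eq_mk_map_toWord]
  congr 1
  refine (List.map_congr_left fun p hp => ?_).trans (List.map_id _)
  simp [hh ⟨p, hp, rfl⟩]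

theorem map_ne_one_of_injOn_letters {f : α → β} {w : FreeGroup α}
    (hf : Set.InjOn f w.letters) (hw : w ≠ 1) : map f w ≠ 1 := by
  obtain ⟨p, -⟩ := List.exists_mem_of_ne_nil w.toWord (by rwa [Ne, toWord_eq_nil_iff])
  have : Nonempty α := ⟨p.1⟩
  intro h
  apply hw
  rw [← map_eq_self_of_eqOn_letters hf.leftInvOn_invFunOn]
  change map (Function.invFunOn f w.letters ∘ f) w = 1
  rw [← map.comp, h, _root_.map_one]

end FreeGroup

theorem eventually_injOn_restrict_fin {β : Type*} {S : Set (ℕ → β)} (hS : S.Finite) :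
    ∀ᶠ n in atTop, S.InjOn fun x (i : Fin n) => x i := by
  have separated : ∀ x y : ℕ → β, ∀ᶠ n in atTop,
      ((fun i : Fin n => x i) = fun i : Fin n => y i) → x = y := by
    intro x y
    by_cases hxy : x = y
    · exact Eventually.of_forall fun _ _ => hxy
    obtain ⟨i, hi⟩ := Function.ne_iff.1 hxy
    filter_upwards [eventually_gt_atTop i] with n hn heq
    exact absurd (congrFun heq ⟨i, hn⟩) hi
  filter_upwards [(eventually_all_finite hS).2 fun x _ =>
    (eventually_all_finite hS).2 fun y _ => separated x y] with n h x hx y hy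
  exact h x hx y hy

theorem stmt4_general (m : ℕ → ℕ)
    (c : ∀ n : ℕ, FreeGroup (Fin n → Bool) →* Equiv.Perm (Set.Ico (m n) (m (n + 1))))
    (hinj : ∀ n, Set.InjOn ⇑(c n) {w | FreeGroup.norm w ≤ n})
    (ρ : FreeGroup (ℕ → Bool) →* Equiv.Perm ℕ)
    (hρ : ∀ (w : FreeGroup (ℕ → Bool)) (n k : ℕ) (hk : k ∈ Set.Ico (m n) (m (n + 1))),
      ρ w k = ((c n) ((FreeGroup.map fun (x : ℕ → Bool) (i : Fin n) => x i) w) ⟨k, hk⟩ : ℕ)) :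
    Function.Injective ⇑ρ := by
  classical
  refine (injective_iff_map_eq_one ρ).2 fun w hw => ?_
  by_contra hw1
  obtain ⟨n, hsep, hlen⟩ := ((eventually_injOn_restrict_fin w.letters_finite).and
    (eventually_ge_atTop w.norm)).exists
  set v := FreeGroup.map (fun (x : ℕ → Bool) (i : Fin n) => x i) w
  have hv : v ≠ 1 := FreeGroup.map_ne_one_of_injOn_letters hsep hw1
  have hcv : c n v = 1 :=
    Equiv.ext fun k => Subtype.ext <| by simpa [hw] using (hρ w n k k.2).symm
  exact hv <| hinj n ((FreeGroup.norm_map_le _ w).trans hlen) (by simp) (by rw [hcv, map_one])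

theorem stmt4 (m : ℕ → ℕ) (hmono : StrictMono m) (hm0 : m 0 = 0)
    (c : ∀ n : ℕ, FreeGroup (Fin n → Bool) →* Equiv.Perm (Set.Ico (m n) (m (n + 1))))
    (hinj : ∀ n, Set.InjOn ⇑(c n) {w | FreeGroup.norm w ≤ n})
    (ρ : FreeGroup (ℕ → Bool) →* Equiv.Perm ℕ)
    (hρ : ∀ (w : FreeGroup (ℕ → Bool)) (n k : ℕ) (hk : k ∈ Set.Ico (m n) (m (n + 1))),
      ρ w k = ((c n) ((FreeGroup.map fun (x : ℕ → Bool) (i : Fin n) => x i) w) ⟨k, hk⟩ : ℕ)) :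
    Function.Injective ⇑ρ :=
  stmt4_general m c hinj ρ hρ
end

section
/- With ρ as above (ρ(w) ↾ I_n = c_n(r_n(w)) for each reduced word w ∈ F({0,1}^ℕ)), the image group C = ρ[F({0,1}^ℕ)] is cofinitary: every non-identity element of C has only finitely many fixed points. -/
lemma norm_map_le' {α β : Type*} [DecidableEq α] [DecidableEq β] (f : α → β) (x : FreeGroup α) :
    FreeGroup.norm (FreeGroup.map f x) ≤ FreeGroup.norm x := by
  calc FreeGroup.norm (FreeGroup.map f x)
      = FreeGroup.norm (FreeGroup.map f (FreeGroup.mk x.toWord)) := by rw [FreeGroup.mk_toWord]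
    _ = FreeGroup.norm (FreeGroup.mk (x.toWord.map fun p => (f p.1, p.2))) := by
        rw [FreeGroup.map.mk]
    _ ≤ (x.toWord.map fun p => (f p.1, p.2)).length := FreeGroup.norm_mk_le
    _ = FreeGroup.norm x := by rw [List.length_map]; rfl

theorem stmt5 (m : ℕ → ℕ) (hmono : StrictMono m) (hm0 : m 0 = 0)
    (c : ∀ n : ℕ, FreeGroup (Fin n → Bool) →* Equiv.Perm (Set.Ico (m n) (m (n + 1))))
    (hinj : ∀ n, Set.InjOn ⇑(c n) {w | FreeGroup.norm w ≤ n})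
    (hfree : ∀ (n : ℕ) (w : FreeGroup (Fin n → Bool)), FreeGroup.norm w ≤ n → w ≠ 1 →
      ∀ x, (c n) w x ≠ x)
    (ρ : FreeGroup (ℕ → Bool) →* Equiv.Perm ℕ)
    (hρ : ∀ (w : FreeGroup (ℕ → Bool)) (n k : ℕ) (hk : k ∈ Set.Ico (m n) (m (n + 1))),
      ρ w k = ((c n) ((FreeGroup.map fun (x : ℕ → Bool) (i : Fin n) => x i) w) ⟨k, hk⟩ : ℕ)) :
    ∀ w : FreeGroup (ℕ → Bool), ρ w ≠ 1 → {k : ℕ | ρ w k = k}.Finite := by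
  classical
  intro w hw
  -- every k belongs to some interval
  have hmem : ∀ k : ℕ, ∃ n, k ∈ Set.Ico (m n) (m (n + 1)) := by
    intro k
    have hub : ∃ n, k < m n := ⟨k + 1, lt_of_lt_of_le (Nat.lt_succ_self k) (hmono.le_apply)⟩
    have hN : k < m (Nat.find hub) := Nat.find_spec hub
    have hNpos : Nat.find hub ≠ 0 := by
      intro h0
      rw [h0, hm0] at hN; omega
    obtain ⟨n, hn⟩ := Nat.exists_eq_succ_of_ne_zero hNpos
    rw [hn] at hN
    refine ⟨n, ?_, hN⟩
    by_contra hlt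
    exact Nat.find_min hub (hn ▸ Nat.lt_succ_self n) (by omega)
  obtain ⟨k₀, hk₀⟩ : ∃ k, ρ w k ≠ k := by
    by_contra h
    push_neg at h
    exact hw (Equiv.ext h)
  obtain ⟨n₀, hk₀mem⟩ := hmem k₀
  have hrn₀ : (FreeGroup.map fun (x : ℕ → Bool) (i : Fin n₀) => x i) w ≠ 1 := by
    intro h1
    apply hk₀
    rw [hρ w n₀ k₀ hk₀mem, h1, map_one]
    rfl
  -- for n ≥ n₀, the restriction is ≠ 1
  have hrn : ∀ n, n₀ ≤ n →
      (FreeGroup.map fun (x : ℕ → Bool) (i : Fin n) => x i) w ≠ 1 := by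
    intro n hn h1
    apply hrn₀
    have hcomp := FreeGroup.map.comp (fun (x : ℕ → Bool) (i : Fin n) => x i)
      (fun (x : Fin n → Bool) (i : Fin n₀) => x ⟨i, lt_of_lt_of_le i.2 hn⟩) w
    rw [h1, map_one] at hcomp
    exact hcomp.symm
  have hnorm : ∀ n, FreeGroup.norm
      ((FreeGroup.map fun (x : ℕ → Bool) (i : Fin n) => x i) w) ≤ FreeGroup.norm w :=
    fun n => norm_map_le' _ w
  set N := max n₀ (FreeGroup.norm w) with hN
  apply Set.Finite.subset (Set.finite_Iio (m N))
  intro k hk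
  simp only [Set.mem_setOf_eq] at hk
  simp only [Set.mem_Iio]
  by_contra hge
  push_neg at hge
  obtain ⟨n, hkn⟩ := hmem k
  have hnN : N ≤ n := by
    by_contra hlt
    push_neg at hlt
    have := hmono.monotone (show n+1 ≤ N from hlt)
    have := hkn.2
    omega
  have h1 := hrn n (le_trans (le_max_left _ _) hnN)
  have h2 : FreeGroup.norm ((FreeGroup.map fun (x : ℕ → Bool) (i : Fin n) => x i) w) ≤ n :=
    le_trans (hnorm n) (le_trans (le_max_right _ _) hnN)
  apply hfree n _ h2 h1 ⟨k, hkn⟩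
  have hρk := hρ w n k hkn
  rw [hk] at hρk
  exact Subtype.ext hρk.symm
end

section
/- Let g ∈ S_∞, f a partial injection from ℕ to ℕ, and D ⊆ dom(f) a (g,f)-spaced set, meaning: for all m, m' ∈ D and all h ∈ {f, g⁻¹∘f, f⁻¹∘g⁻¹∘f, f⁻¹∘g∘f}, h(m) ≠ m' (whenever defined). Then the surgery map g ⊔_D f defined by: (g ⊔_D f)(m) = f(m) if m ∈ D (unless f(m) = g(m), then g(m)); (g ⊔_D f)(m) = g(f⁻¹(m)) if m ∈ f[D]; (g ⊔_D f)(m) = g(g(m)) if m ∈ (g⁻¹∘f)[D]; and (g ⊔_D f)(m) = g(m) otherwise, is a well-defined permutation of ℕ. -/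
open Classical in
/-- Surgery: graft the partial injection `f` onto the permutation `g` along `D`. -/
noncomputable def surgery (g : Equiv.Perm ℕ) (D : Set ℕ) (f : ℕ → ℕ) : ℕ → ℕ := fun m =>
  if m ∈ D then f m
  else if m ∈ f '' D then g (Function.invFunOn f D m)
  else if m ∈ (fun x => g.symm (f x)) '' D then g (g m)
  else g m

/-- `D` is `(g,f)`-spaced: for `m, m' ∈ D` and `h` among
`f`, `g⁻¹∘f`, `f⁻¹∘g⁻¹∘f`, `f⁻¹∘g∘f`, we have `h m ≠ m'` (whenever defined). -/
def Spaced (g : Equiv.Perm ℕ) (f : ℕ → ℕ) (D : Set ℕ) : Prop :=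
  ∀ m ∈ D, ∀ m' ∈ D,
    f m ≠ m' ∧ g.symm (f m) ≠ m' ∧ g.symm (f m) ≠ f m' ∧ g (f m) ≠ f m'

theorem stmt6 (g : Equiv.Perm ℕ) (f : ℕ → ℕ) (dom D : Set ℕ)
    (hDdom : D ⊆ dom) (hinj : Set.InjOn f dom) (hsp : Spaced g f D) :
    Function.Bijective (surgery g D f) := by
  classical
  have hinjD : Set.InjOn f D := hinj.mono hDdom
  have hlinv : ∀ d ∈ D, Function.invFunOn f D (f d) = d := fun d hd =>
    hinjD.leftInvOn_invFunOn hd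
  have h1 : ∀ d ∈ D, f d ∉ D := fun d hd hfd => (hsp d hd (f d) hfd).1 rfl
  have h2 : ∀ d ∈ D, g.symm (f d) ∉ D := fun d hd h => (hsp d hd _ h).2.1 rfl
  have h3 : ∀ d ∈ D, g.symm (f d) ∉ f '' D := by
    rintro d hd ⟨d', hd', he⟩
    exact (hsp d hd d' hd').2.2.1 he.symm
  have h5 : ∀ d ∈ D, g (f d) ∉ f '' D := by
    rintro d hd ⟨d', hd', he⟩
    exact (hsp d hd d' hd').2.2.2 he.symm
  -- value lemmas
  have valD : ∀ m ∈ D, surgery g D f m = f m := by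
    intro m hm
    unfold surgery
    rw [if_pos hm]
  have valB : ∀ d ∈ D, surgery g D f (f d) = g d := by
    intro d hd
    have hmB : f d ∈ f '' D := Set.mem_image_of_mem f hd
    unfold surgery
    rw [if_neg (h1 d hd), if_pos hmB, hlinv d hd]
  have valC : ∀ d ∈ D, surgery g D f (g.symm (f d)) = g (f d) := by
    intro d hd
    have hmem : g.symm (f d) ∈ (fun x => g.symm (f x)) '' D :=
      Set.mem_image_of_mem _ hd
    unfold surgery
    rw [if_neg (h2 d hd), if_neg (h3 d hd), if_pos hmem, Equiv.apply_symm_apply]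
  have valE : ∀ m, m ∉ D → m ∉ f '' D → m ∉ (fun x => g.symm (f x)) '' D →
      surgery g D f m = g m := by
    intro m hm1 hm2 hm3
    unfold surgery
    rw [if_neg hm1, if_neg hm2, if_neg hm3]
  -- the inverse map
  set t : ℕ → ℕ := fun n =>
    if g.symm n ∈ D then f (g.symm n)
    else if n ∈ f '' D then Function.invFunOn f D n
    else if g.symm n ∈ f '' D then g.symm (g.symm n)
    else g.symm n with ht
  have tval : ∀ n, t n =
      if g.symm n ∈ D then f (g.symm n)
      else if n ∈ f '' D then Function.invFunOn f D n
      else if g.symm n ∈ f '' D then g.symm (g.symm n)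
      else g.symm n := fun n => rfl
  refine Function.bijective_iff_has_inverse.2 ⟨t, ?_, ?_⟩
  · -- left inverse: t (surgery m) = m
    intro m
    by_cases hm : m ∈ D
    · rw [valD m hm, tval]
      rw [if_neg (h2 m hm), if_pos (Set.mem_image_of_mem f hm)]
      exact hlinv m hm
    by_cases hB : m ∈ f '' D
    · obtain ⟨d, hd, rfl⟩ := hB
      rw [valB d hd, tval, Equiv.symm_apply_apply, if_pos hd]
    by_cases hC : m ∈ (fun x => g.symm (f x)) '' D
    · obtain ⟨d, hd, rfl⟩ := hC
      show t (surgery g D f (g.symm (f d))) = g.symm (f d)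
      rw [valC d hd, tval, Equiv.symm_apply_apply, if_neg (h1 d hd),
        if_neg (h5 d hd), if_pos (Set.mem_image_of_mem f hd)]
    · rw [valE m hm hB hC, tval, Equiv.symm_apply_apply]
      have hgm : g m ∉ f '' D := by
        rintro ⟨d, hd, he⟩
        refine hC ⟨d, hd, ?_⟩
        show g.symm (f d) = m
        rw [he, Equiv.symm_apply_apply]
      rw [if_neg hm, if_neg hgm, if_neg hB]
  · -- right inverse: surgery (t n) = n
    intro n
    rw [tval]
    by_cases hc1 : g.symm n ∈ D
    · rw [if_pos hc1, valB _ hc1, Equiv.apply_symm_apply]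
    rw [if_neg hc1]
    by_cases hc2 : n ∈ f '' D
    · rw [if_pos hc2]
      obtain ⟨d, hd, rfl⟩ := hc2
      rw [hlinv d hd, valD d hd]
    rw [if_neg hc2]
    by_cases hc3 : g.symm n ∈ f '' D
    · rw [if_pos hc3]
      obtain ⟨d, hd, he⟩ := hc3
      rw [← he, valC d hd, he, Equiv.apply_symm_apply]
    · rw [if_neg hc3]
      have hnc : g.symm n ∉ (fun x => g.symm (f x)) '' D := by
        rintro ⟨d, hd, he⟩
        refine hc2 ⟨d, hd, ?_⟩
        exact g.symm.injective he
      rw [valE _ hc1 hc3 hnc, Equiv.apply_symm_apply]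
end

section
/- If (g, D, f) is in the domain of surgery (D is (g,f)-spaced), f ∈ S_∞, and {g, f} freely generates a cofinitary subgroup of S_∞, then g ⊔_D f has only finitely many fixed points. -/
theorem stmt8 (g f : Equiv.Perm ℕ) (D : Set ℕ) (hsp : Spaced g ⇑f D)
    (φ : FreeGroup Bool →* Equiv.Perm ℕ)
    (hφ : φ = FreeGroup.lift fun b => if b then g else f)
    (hfreeinj : Function.Injective ⇑φ)
    (hcof : ∀ w : FreeGroup Bool, φ w ≠ 1 → {n : ℕ | φ w n = n}.Finite) :
    {m : ℕ | surgery g D ⇑f m = m}.Finite := by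
  classical
  set ψ : FreeGroup Bool →* Multiplicative ℤ :=
    FreeGroup.lift (fun b => Multiplicative.ofAdd (if b then (1:ℤ) else 2)) with hψ
  have key : ∀ w : FreeGroup Bool, ψ w ≠ 1 → {n : ℕ | φ w n = n}.Finite := by
    intro w hw
    apply hcof
    intro h
    apply hw
    have hw1 : w = 1 := hfreeinj (by simpa using h)
    simp [hw1]
  -- the four fixed point sets
  have hf : {n : ℕ | f n = n}.Finite := by
    have h := key (FreeGroup.of false) (by
      simp only [hψ, FreeGroup.lift_apply_of, if_false]
      decide)
    simpa [hφ] using h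
  have hg : {n : ℕ | g n = n}.Finite := by
    have h := key (FreeGroup.of true) (by
      simp only [hψ, FreeGroup.lift_apply_of, if_true]
      decide)
    simpa [hφ] using h
  have hg2 : {n : ℕ | g (g n) = n}.Finite := by
    have h := key (FreeGroup.of true * FreeGroup.of true) (by
      simp only [hψ, map_mul, FreeGroup.lift_apply_of, if_true]
      decide)
    simpa [hφ] using h
  have hgf : {n : ℕ | g (f.symm n) = n}.Finite := by
    have h := key (FreeGroup.of true * (FreeGroup.of false)⁻¹) (by
      simp only [hψ, map_mul, map_inv, FreeGroup.lift_apply_of]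
      decide)
    have heval : ∀ n, φ (FreeGroup.of true * (FreeGroup.of false)⁻¹) n
        = g (f.symm n) := by
      intro n
      simp [hφ, Equiv.Perm.inv_def]
    simpa only [heval] using h
  apply Set.Finite.subset (((hf.union hgf).union hg2).union hg)
  intro m hm
  simp only [Set.mem_setOf_eq, surgery] at hm
  by_cases h1 : m ∈ D
  · left; left; left
    rw [if_pos h1] at hm
    exact hm
  rw [if_neg h1] at hm
  by_cases h2 : m ∈ ⇑f '' D
  · left; left; right
    rw [if_pos h2] at hm
    have hex : ∃ a ∈ D, f a = m := by
      obtain ⟨a, ha, rfl⟩ := h2; exact ⟨a, ha, rfl⟩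
    have hfm : f (Function.invFunOn (⇑f) D m) = m := Function.invFunOn_eq hex
    have : Function.invFunOn (⇑f) D m = f.symm m := by
      apply f.injective
      rw [hfm, Equiv.apply_symm_apply]
    rw [this] at hm
    exact hm
  rw [if_neg h2] at hm
  by_cases h3 : m ∈ (fun x => g.symm (f x)) '' D
  · left; right
    rw [if_pos h3] at hm
    exact hm
  · right
    rw [if_neg h3] at hm
    exact hm
end

section
/- No maximal cofinitary group is contained in a K_σ subset of ℕ^ℕ: if G ≤ S_∞ is cofinitary and G ⊆ ⋃_{n} K_n with each K_n ⊆ ℕ^ℕ compact, then G is not maximal. -/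
open Function Subgroup

lemma Function.Periodic.exists_forall_le {α : Type*} [LinearOrder α] {f : ℕ → α} {k : ℕ}
    (hf : Periodic f k) (hk : 0 < k) : ∃ i, k ≤ i ∧ i < 2 * k ∧ ∀ j, f j ≤ f i := by
  obtain ⟨i, hi, hmax⟩ := Finset.exists_max_image (Finset.range k) f ⟨0, by simpa using hk⟩
  refine ⟨i + k, by omega, by simp at hi; omega, fun j => ?_⟩
  rw [hf i, ← hf.map_mod_nat j]
  exact hmax _ (Finset.mem_range.mpr (Nat.mod_lt j hk))

section Words

variable {Γ : Type*} [Group Γ]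

def sgnPow (s : Γ) (b : Bool) : Γ := if b then s else s⁻¹

@[simp] lemma sgnPow_true (s : Γ) : sgnPow s true = s := rfl

@[simp] lemma sgnPow_false (s : Γ) : sgnPow s false = s⁻¹ := rfl

lemma sgnPow_mul_sgnPow_of_ne (s : Γ) {a b : Bool} (h : a ≠ b) :
    sgnPow s a * sgnPow s b = 1 := by
  cases a <;> cases b <;> simp_all

/-- `wordProd s c ε k = c (k-1) * s^±1 * ⋯ * c 0 * s^±1`, the sign of the `i`-th power being
`ε i`; the index `0` is the letter applied first. -/
def wordProd (s : Γ) (c : ℕ → Γ) (ε : ℕ → Bool) : ℕ → Γ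
  | 0 => 1
  | k + 1 => c k * sgnPow s (ε k) * wordProd s c ε k

variable {s : Γ} {c c' : ℕ → Γ} {ε ε' : ℕ → Bool} {k : ℕ}

lemma wordProd_congr (hc : ∀ i < k, c i = c' i) (hε : ∀ i < k, ε i = ε' i) :
    wordProd s c ε k = wordProd s c' ε' k := by
  induction k with
  | zero => rfl
  | succ k ih =>
    rw [wordProd, wordProd, hc k k.lt_add_one, hε k k.lt_add_one,
      ih (fun i hi => hc i (by omega)) (fun i hi => hε i (by omega))]

lemma wordProd_update (a : Γ) (δ : Bool) :
    wordProd s (update c k a) (update ε k δ) (k + 1) = a * sgnPow s δ * wordProd s c ε k := by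
  rw [wordProd, update_self, update_self,
    wordProd_congr (fun i hi => update_of_ne hi.ne _ _) (fun i hi => update_of_ne hi.ne _ _)]

lemma wordProd_add (s : Γ) (c : ℕ → Γ) (ε : ℕ → Bool) (m n : ℕ) :
    wordProd s c ε (m + n) =
      wordProd s (fun i => c (i + n)) (fun i => ε (i + n)) m * wordProd s c ε n := by
  induction m with
  | zero => simp [wordProd]
  | succ m ih => simp only [Nat.add_right_comm m 1 n, wordProd, ih, mul_assoc]

lemma wordProd_add_of_periodic (hc : Periodic c k) (hε : Periodic ε k) (m : ℕ) :
    wordProd s c ε (m + k) = wordProd s c ε m * wordProd s c ε k := by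
  rw [wordProd_add]
  simp only [hc _, hε _]

lemma wordProd_mod : wordProd s (fun i => c (i % k)) (fun i => ε (i % k)) k = wordProd s c ε k :=
  wordProd_congr (fun i hi => by rw [Nat.mod_eq_of_lt hi]) (fun i hi => by rw [Nat.mod_eq_of_lt hi])

lemma mul_wordProd_succ (a : Γ) :
    a * wordProd s c ε (k + 1) = wordProd s (update c k (a * c k)) ε (k + 1) := by
  conv_rhs => rw [← update_eq_self k ε, wordProd_update]
  rw [wordProd, mul_assoc, mul_assoc, mul_assoc]

lemma sgnPow_mul_wordProd_mul_inv (hε : ε 0 ≠ ε (k + 1)) (hc : c (k + 1) = 1) :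
    sgnPow s (ε 0) * wordProd s c ε (k + 2) * (sgnPow s (ε 0))⁻¹ =
      wordProd s (fun i => c (i + 1)) (fun i => ε (i + 1)) k * c 0 := by
  rw [wordProd, hc, one_mul, wordProd_add, wordProd, wordProd, ← mul_assoc, ← mul_assoc,
    sgnPow_mul_sgnPow_of_ne s hε]
  group

variable (G : Subgroup Γ)

structure IsReducedWord (k : ℕ) (c : ℕ → Γ) (ε : ℕ → Bool) : Prop where
  mem : ∀ i, c i ∈ G
  ne_one : ∀ i, i + 1 < k → ε (i + 1) ≠ ε i → c i ≠ 1

/-- A reduced word read cyclically, encoded by `k`-periodic sequences of letters and signs. -/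
structure IsCyclicallyReducedWord (k : ℕ) (c : ℕ → Γ) (ε : ℕ → Bool) : Prop where
  pos : 0 < k
  mem : ∀ i, c i ∈ G
  periodic_c : Periodic c k
  periodic_ε : Periodic ε k
  ne_one : ∀ i, ε (i + 1) ≠ ε i → c i ≠ 1

def reducedWordValues (s : Γ) : Set Γ :=
  {h | ∃ k c ε, IsReducedWord G k c ε ∧ ∃ g ∈ G, h = wordProd s c ε k * g}

variable {G}

lemma IsReducedWord.update_last (hw : IsReducedWord G (k + 1) c ε) {a : Γ} (ha : a ∈ G) :
    IsReducedWord G (k + 1) (update c k a) ε where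
  mem i := by
    rcases eq_or_ne i k with rfl | hik
    · simpa using ha
    · simpa [hik] using hw.mem i
  ne_one i hi := by
    rw [update_of_ne (by omega)]
    exact hw.ne_one i hi

lemma one_mem_reducedWordValues : (1 : Γ) ∈ reducedWordValues G s :=
  ⟨0, fun _ => 1, fun _ => true, ⟨fun _ => G.one_mem, by simp⟩, 1, G.one_mem,
    by simp [wordProd]⟩

lemma mul_mem_reducedWordValues {a h : Γ} (ha : a ∈ G) (hh : h ∈ reducedWordValues G s) :
    a * h ∈ reducedWordValues G s := by
  obtain ⟨k, c, ε, hw, g, hg, rfl⟩ := hh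
  cases k with
  | zero => exact ⟨0, c, ε, hw, a * g, mul_mem ha hg, by simp [wordProd]⟩
  | succ k =>
    exact ⟨k + 1, _, ε, hw.update_last (mul_mem ha (hw.mem k)), g, hg,
      by rw [← mul_assoc, mul_wordProd_succ]⟩

lemma sgnPow_mul_mem_reducedWordValues (δ : Bool) {h : Γ} (hh : h ∈ reducedWordValues G s) :
    sgnPow s δ * h ∈ reducedWordValues G s := by
  obtain ⟨k, c, ε, hw, g, hg, rfl⟩ := hh
  by_cases hcancel : ∃ j, k = j + 1 ∧ c j = 1 ∧ ε j ≠ δ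
  · obtain ⟨j, rfl, hc1, hne⟩ := hcancel
    refine ⟨j, c, ε, ⟨hw.mem, fun i hi => hw.ne_one i (by omega)⟩, g, hg, ?_⟩
    rw [wordProd, hc1, one_mul, ← mul_assoc, ← mul_assoc, sgnPow_mul_sgnPow_of_ne s hne.symm,
      one_mul]
  · refine ⟨k + 1, update c k 1, update ε k δ, ⟨fun i => ?_, fun i hi hne => ?_⟩, g, hg,
      ?_⟩
    · rcases eq_or_ne i k with rfl | hik
      · simp
      · simpa [hik] using hw.mem i
    · rw [update_of_ne (by omega)]
      rw [update_of_ne (show i ≠ k by omega)] at hne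
      rcases Nat.lt_or_ge (i + 1) k with hik | hik
      · rw [update_of_ne hik.ne] at hne
        exact hw.ne_one i hik hne
      · obtain rfl : k = i + 1 := by omega
        rw [update_self] at hne
        exact fun hc1 => hcancel ⟨i, rfl, hc1, Ne.symm hne⟩
    · rw [wordProd_update, one_mul, mul_assoc]

lemma closure_insert_subset_reducedWordValues :
    (closure (insert s (G : Set Γ)) : Set Γ) ⊆ reducedWordValues G s := by
  intro h hh
  induction hh using closure_induction_left with
  | one => exact one_mem_reducedWordValues
  | mul_left x hx y _ ih =>
    rcases hx with rfl | hx
    · exact sgnPow_mul_mem_reducedWordValues true ih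
    · exact mul_mem_reducedWordValues hx ih
  | inv_mul_cancel x hx y _ ih =>
    rcases hx with rfl | hx
    · exact sgnPow_mul_mem_reducedWordValues false ih
    · exact mul_mem_reducedWordValues (inv_mem hx) ih

lemma IsReducedWord.isCyclicallyReducedWord_mod (hw : IsReducedWord G (k + 1) c ε)
    (hwrap : ε 0 ≠ ε k → c k ≠ 1) :
    IsCyclicallyReducedWord G (k + 1) (fun i => c (i % (k + 1))) (fun i => ε (i % (k + 1))) where
  pos := k.succ_pos
  mem i := hw.mem _
  periodic_c i := by simp
  periodic_ε i := by simp
  ne_one i := by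
    have hmod : (i + 1) % (k + 1) = (i % (k + 1) + 1) % (k + 1) :=
      ((Nat.mod_modEq i (k + 1)).add_right 1).symm
    have hi : i % (k + 1) < k + 1 := Nat.mod_lt _ k.succ_pos
    rcases Nat.lt_or_ge (i % (k + 1) + 1) (k + 1) with h | h
    · rw [hmod, Nat.mod_eq_of_lt h]
      exact hw.ne_one _ h
    · obtain hk : i % (k + 1) = k := by omega
      rw [hmod, hk, Nat.mod_self]
      exact hwrap

theorem forall_mem_reducedWordValues {P : Γ → Prop} (hconj : ∀ u h, P (u * h * u⁻¹) → P h)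
    (hG : ∀ g ∈ G, P g)
    (hcyc : ∀ k c ε, IsCyclicallyReducedWord G k c ε → P (wordProd s c ε k)) :
    ∀ h ∈ reducedWordValues G s, P h := by
  rintro _ ⟨k, c, ε, hw, g, hg, rfl⟩
  induction k using Nat.strong_induction_on generalizing c ε g with
  | _ k ih =>
  rcases k with _ | k
  · simpa [wordProd] using hG g hg
  apply hconj g
  rw [mul_assoc, mul_inv_cancel_right, mul_wordProd_succ]
  have hwd := hw.update_last (mul_mem hg (hw.mem k))
  by_cases hwrap : ε 0 ≠ ε k → update c k (g * c k) k ≠ 1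
  · rw [← wordProd_mod]
    exact hcyc _ _ _ (hwd.isCyclicallyReducedWord_mod hwrap)
  obtain ⟨hε, hd1⟩ := Classical.not_imp.mp hwrap
  rcases k with _ | j
  · exact absurd rfl hε
  apply hconj (sgnPow s (ε 0))
  rw [sgnPow_mul_wordProd_mul_inv hε (not_not.mp hd1)]
  refine ih j (by omega) _ _ ⟨fun i => ?_, fun i hi => ?_⟩ _ (hwd.mem 0)
  · exact hwd.mem (i + 1)
  · exact hwd.ne_one (i + 1) (by omega)

end Words

open Equiv MulAction in
theorem Cofinitary.closure_insert {G : Subgroup (Perm ℕ)} (hG : Cofinitary G) (s : Perm ℕ)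
    (hcyc : ∀ k c ε, IsCyclicallyReducedWord G k c ε →
      (fixedBy ℕ (wordProd s c ε k)).Finite) :
    Cofinitary (closure (insert s (G : Set (Perm ℕ)))) := by
  intro h hh
  refine forall_mem_reducedWordValues (P := fun h => h ≠ 1 → (fixedBy ℕ h).Finite) ?_ hG
    (fun k c ε hw _ => hcyc k c ε hw) h (closure_insert_subset_reducedWordValues hh)
  intro u h hconj hne
  rw [← Set.finite_smul_set (a := u), smul_fixedBy]
  exact hconj (by simpa using hne)

namespace StagedPerm

open Equiv Finset Function MulAction

variable (J : ℕ → Set (ℕ → ℕ))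

def avoid (e : ℕ) (D : Finset ℕ) : Set ℕ := ↑D ∪ ⋃ d ∈ D, (fun f => f d) '' J e

noncomputable def fresh (e : ℕ) (D : Finset ℕ) : ℕ := sSup (avoid J e D) + 1

noncomputable def target (e : ℕ) (used D : Finset ℕ) : ℕ :=
  if e / 2 ∈ used then fresh J e D else e / 2

/-- The pair `(a, σ a)` added at stage `e`, given the domain and range built so far. -/
noncomputable def stagePair (e : ℕ) (dom ran : Finset ℕ) : ℕ × ℕ :=
  if Even e then
    (target J e dom (dom ∪ ran), fresh J e (insert (target J e dom (dom ∪ ran)) (dom ∪ ran)))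
  else
    (fresh J e (insert (target J e ran (dom ∪ ran)) (dom ∪ ran)), target J e ran (dom ∪ ran))

noncomputable def history : ℕ → Finset ℕ × Finset ℕ
  | 0 => (∅, ∅)
  | e + 1 =>
    (insert (stagePair J e (history e).1 (history e).2).1 (history e).1,
      insert (stagePair J e (history e).1 (history e).2).2 (history e).2)

noncomputable def src (e : ℕ) : ℕ := (stagePair J e (history J e).1 (history J e).2).1

noncomputable def tgt (e : ℕ) : ℕ := (stagePair J e (history J e).1 (history J e).2).2

noncomputable def coords (e : ℕ) : Finset ℕ := {src J e, tgt J e}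

noncomputable def used (e : ℕ) : Finset ℕ := (range e).biUnion (coords J)

variable {J}

lemma finite_avoid {e : ℕ} (hJ : IsCompact (J e)) (D : Finset ℕ) : (avoid J e D).Finite :=
  D.finite_toSet.union <| D.finite_toSet.biUnion fun d _ =>
    (hJ.image (continuous_apply d)).finite_of_discrete

lemma fresh_notMem_avoid {e : ℕ} (hJ : IsCompact (J e)) (D : Finset ℕ) :
    fresh J e D ∉ avoid J e D := fun h =>
  (Nat.lt_add_one _).not_ge (le_csSup (finite_avoid hJ D).bddAbove h)

lemma notMem_of_notMem_avoid {e y : ℕ} {D : Finset ℕ} (h : y ∉ avoid J e D) : y ∉ D :=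
  fun hy => h (Or.inl hy)

lemma apply_ne_of_notMem_avoid {e y d : ℕ} {D : Finset ℕ} (h : y ∉ avoid J e D)
    {f : ℕ → ℕ} (hf : f ∈ J e) (hd : d ∈ D) : f d ≠ y :=
  fun hfd => h (Or.inr (Set.mem_biUnion hd ⟨f, hf, hfd⟩))

lemma perm_apply_notMem_of_notMem_avoid {e y : ℕ} {D : Finset ℕ} (h : y ∉ avoid J e D)
    {g : Perm ℕ} (hg : ⇑g⁻¹ ∈ J e) : g y ∉ D :=
  fun hd => apply_ne_of_notMem_avoid h hg hd (by simp)

lemma target_notMem {e : ℕ} (hJ : IsCompact (J e)) {used D : Finset ℕ} (h : used ⊆ D) :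
    target J e used D ∉ used := by
  unfold target
  split_ifs with hu
  · exact fun hf => notMem_of_notMem_avoid (fresh_notMem_avoid hJ D) (h hf)
  · exact hu

lemma mem_or_target_eq (e : ℕ) (used D : Finset ℕ) :
    e / 2 ∈ used ∨ target J e used D = e / 2 := by
  unfold target
  split_ifs with hu
  · exact Or.inl hu
  · exact Or.inr rfl

section StagePair

variable {e : ℕ} (hJ : IsCompact (J e)) {dom ran : Finset ℕ}
include hJ

lemma stagePair_fst_notMem : (stagePair J e dom ran).1 ∉ dom := by
  unfold stagePair
  split_ifs
  · exact target_notMem hJ subset_union_left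
  · exact fun h => notMem_of_notMem_avoid (fresh_notMem_avoid hJ _)
      (mem_insert_of_mem (mem_union_left _ h))

lemma stagePair_snd_notMem : (stagePair J e dom ran).2 ∉ ran := by
  unfold stagePair
  split_ifs
  · exact fun h => notMem_of_notMem_avoid (fresh_notMem_avoid hJ _)
      (mem_insert_of_mem (mem_union_right _ h))
  · exact target_notMem hJ subset_union_right

lemma stagePair_fst_ne_snd : (stagePair J e dom ran).1 ≠ (stagePair J e dom ran).2 := by
  unfold stagePair
  split_ifs <;> intro h <;> dsimp only at h
  · exact notMem_of_notMem_avoid (fresh_notMem_avoid hJ _)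
      (by rw [← h]; exact mem_insert_self _ _)
  · exact notMem_of_notMem_avoid (fresh_notMem_avoid hJ _)
      (by rw [h]; exact mem_insert_self _ _)

lemma stagePair_snd_notMem_avoid_of_even (he : Even e) :
    (stagePair J e dom ran).2 ∉
      avoid J e (insert (stagePair J e dom ran).1 (dom ∪ ran)) := by
  simp only [stagePair, if_pos he]
  exact fresh_notMem_avoid hJ _

lemma stagePair_notMem_avoid :
    (stagePair J e dom ran).2 ∉ avoid J e (insert (stagePair J e dom ran).1 (dom ∪ ran)) ∨
      (stagePair J e dom ran).1 ∉ avoid J e (insert (stagePair J e dom ran).2 (dom ∪ ran)) := by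
  by_cases he : Even e
  · exact Or.inl (stagePair_snd_notMem_avoid_of_even hJ he)
  · simp only [stagePair, if_neg he]
    exact Or.inr (fresh_notMem_avoid hJ _)

omit hJ

lemma mem_or_stagePair_fst_eq (he : Even e) :
    e / 2 ∈ dom ∨ (stagePair J e dom ran).1 = e / 2 := by
  simp only [stagePair, if_pos he]
  exact mem_or_target_eq e dom _

lemma mem_or_stagePair_snd_eq (he : ¬Even e) :
    e / 2 ∈ ran ∨ (stagePair J e dom ran).2 = e / 2 := by
  simp only [stagePair, if_neg he]
  exact mem_or_target_eq e ran _

end StagePair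

lemma history_eq (e : ℕ) : history J e = ((range e).image (src J), (range e).image (tgt J)) := by
  induction e with
  | zero => rfl
  | succ e ih =>
    change (insert (src J e) (history J e).1, insert (tgt J e) (history J e).2) = _
    rw [ih, range_add_one, image_insert, image_insert]

lemma used_eq (e : ℕ) : used J e = (history J e).1 ∪ (history J e).2 := by
  ext y
  simp only [used, coords, history_eq, mem_biUnion, mem_union, mem_image, mem_insert,
    mem_singleton]
  grind

lemma mem_used {e y : ℕ} : y ∈ used J e ↔ ∃ i < e, y ∈ coords J i := by
  simp [used]

lemma stage_eq_of_notMem_used {e ρ y : ℕ} (hy : y ∈ coords J e) (he : e ≤ ρ)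
    (hρ : y ∉ used J ρ) : e = ρ :=
  he.eq_of_not_lt fun h => hρ (mem_used.mpr ⟨e, h, hy⟩)

lemma apply_eq_self_of_notMem_avoid {ρ e y z : ℕ} (hyz : coords J ρ = {y, z})
    (hy : y ∉ avoid J ρ (insert z (used J ρ))) {g : Perm ℕ} (hg : ⇑g⁻¹ ∈ J ρ)
    (hgy : g y ∈ coords J e) (he : e ≤ ρ) : g y = y := by
  have hnew := perm_apply_notMem_of_notMem_avoid hy hg
  rcases he.lt_or_eq with he | rfl
  · exact absurd (mem_insert_of_mem (mem_used.mpr ⟨e, he, hgy⟩)) hnew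
  · rw [hyz, mem_insert, mem_singleton] at hgy
    exact hgy.resolve_right fun h => hnew (h ▸ mem_insert_self _ _)

lemma exists_forall_mem_of_periodic (hmono : Monotone J) {G : Subgroup (Perm ℕ)}
    (hGJ : ∀ g ∈ G, ∃ n, ⇑g ∈ J n) {k : ℕ} (hk : 0 < k) {c : ℕ → Perm ℕ}
    (hc : Periodic c k) (hcG : ∀ i, c i ∈ G) :
    ∃ S, ∀ i, ⇑(c i) ∈ J S ∧ ⇑(c i)⁻¹ ∈ J S := by
  have hGJ' (g : Perm ℕ) (hg : g ∈ G) : ∃ n, ⇑g ∈ J n ∧ ⇑g⁻¹ ∈ J n := by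
    obtain ⟨n, hn⟩ := hGJ g hg
    obtain ⟨m, hm⟩ := hGJ _ (inv_mem hg)
    exact ⟨max n m, hmono (le_max_left n m) hn, hmono (le_max_right n m) hm⟩
  choose N hN using fun i => hGJ' (c i) (hcG i)
  refine ⟨(range k).sup N, fun i => ?_⟩
  rw [← hc.map_mod_nat i]
  have hle := le_sup (f := N) (mem_range.mpr (Nat.mod_lt i hk))
  exact ⟨hmono hle (hN _).1, hmono hle (hN _).2⟩

lemma src_surjective : Surjective (src J) := fun a => by
  have h := mem_or_stagePair_fst_eq (J := J) (dom := (history J (2 * a)).1)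
    (ran := (history J (2 * a)).2) (even_two_mul a)
  rw [Nat.mul_div_cancel_left a two_pos] at h
  rcases h with h | h
  · rw [history_eq] at h
    obtain ⟨i, -, hi⟩ := mem_image.mp h
    exact ⟨i, hi⟩
  · exact ⟨2 * a, h⟩

lemma tgt_surjective : Surjective (tgt J) := fun b => by
  have h := mem_or_stagePair_snd_eq (J := J) (dom := (history J (2 * b + 1)).1)
    (ran := (history J (2 * b + 1)).2) (Nat.not_even_two_mul_add_one b)
  rw [show (2 * b + 1) / 2 = b by omega] at h
  rcases h with h | h
  · rw [history_eq] at h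
    obtain ⟨i, -, hi⟩ := mem_image.mp h
    exact ⟨i, hi⟩
  · exact ⟨2 * b + 1, h⟩

variable (hJ : ∀ e, IsCompact (J e))
include hJ

lemma src_notMem_image (e : ℕ) : src J e ∉ (range e).image (src J) := by
  have : src J e ∉ (history J e).1 := stagePair_fst_notMem (hJ e)
  rwa [history_eq] at this

lemma tgt_notMem_image (e : ℕ) : tgt J e ∉ (range e).image (tgt J) := by
  have : tgt J e ∉ (history J e).2 := stagePair_snd_notMem (hJ e)
  rwa [history_eq] at this

lemma src_ne_tgt (e : ℕ) : src J e ≠ tgt J e := stagePair_fst_ne_snd (hJ e)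

lemma tgt_notMem_avoid_of_even {e : ℕ} (he : Even e) :
    tgt J e ∉ avoid J e (insert (src J e) (used J e)) := by
  rw [used_eq]
  exact stagePair_snd_notMem_avoid_of_even (hJ e) he

lemma notMem_avoid_at_stage (e : ℕ) :
    tgt J e ∉ avoid J e (insert (src J e) (used J e)) ∨
      src J e ∉ avoid J e (insert (tgt J e) (used J e)) := by
  rw [used_eq]
  exact stagePair_notMem_avoid (hJ e)

lemma src_injective : Injective (src J) :=
  Injective.of_lt_imp_ne fun i j hij h =>
    src_notMem_image hJ j (mem_image.mpr ⟨i, mem_range.mpr hij, h⟩)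

lemma tgt_injective : Injective (tgt J) :=
  Injective.of_lt_imp_ne fun i j hij h =>
    tgt_notMem_image hJ j (mem_image.mpr ⟨i, mem_range.mpr hij, h⟩)

noncomputable def srcEquiv : ℕ ≃ ℕ :=
  Equiv.ofBijective _ ⟨src_injective hJ, src_surjective⟩

noncomputable def tgtEquiv : ℕ ≃ ℕ :=
  Equiv.ofBijective _ ⟨tgt_injective hJ, tgt_surjective⟩

noncomputable def perm : Perm ℕ := (srcEquiv hJ).symm.trans (tgtEquiv hJ)

lemma perm_src (e : ℕ) : perm hJ (src J e) = tgt J e :=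
  congrArg (tgtEquiv hJ) ((srcEquiv hJ).symm_apply_apply e)

noncomputable def stage (b : Bool) (u : ℕ) : ℕ :=
  if b then (srcEquiv hJ).symm u else (tgtEquiv hJ).symm u

lemma stage_spec (b : Bool) (u : ℕ) :
    (src J (stage hJ b u), tgt J (stage hJ b u)) =
      if b then (u, sgnPow (perm hJ) b u) else (sgnPow (perm hJ) b u, u) := by
  cases b
  · have h : tgt J (stage hJ false u) = u := (tgtEquiv hJ).apply_symm_apply u
    exact Prod.ext (Perm.eq_inv_iff_eq.mpr ((perm_src hJ _).trans h)) h
  · have h : src J (stage hJ true u) = u := (srcEquiv hJ).apply_symm_apply u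
    exact Prod.ext h (by rw [← perm_src hJ, h]; rfl)

lemma coords_stage (b : Bool) (u : ℕ) :
    coords J (stage hJ b u) = {u, sgnPow (perm hJ) b u} := by
  have h := stage_spec hJ b u
  cases b <;> simp only [Bool.false_eq_true, ↓reduceIte, Prod.mk.injEq] at h <;>
    simp only [coords, h.1, h.2, pair_comm]

lemma stage_sgnPow_ne (b : Bool) (u : ℕ) :
    stage hJ b (sgnPow (perm hJ) b u) ≠ stage hJ b u := by
  intro h
  have h₁ := stage_spec hJ b u
  have h₂ := stage_spec hJ b (sgnPow (perm hJ) b u)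
  rw [h] at h₂
  cases b <;> simp only [Bool.false_eq_true, ↓reduceIte, Prod.mk.injEq] at h₁ h₂
  · exact src_ne_tgt hJ _ (h₁.1.trans h₂.2.symm)
  · exact src_ne_tgt hJ _ (h₂.1.trans h₁.2.symm)

lemma perm_notMem (hmono : Monotone J) (n : ℕ) : ⇑(perm hJ) ∉ J n := fun h =>
  apply_ne_of_notMem_avoid (tgt_notMem_avoid_of_even hJ (even_two_mul n))
    (hmono (by omega : n ≤ 2 * n) h) (mem_insert_self _ _) (perm_src hJ _)

lemma exists_notMem_avoid (ρ : ℕ) :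
    ∃ y z, coords J ρ = {y, z} ∧ y ∉ avoid J ρ (insert z (used J ρ)) := by
  rcases notMem_avoid_at_stage hJ ρ with h | h
  · exact ⟨_, _, pair_comm _ _, h⟩
  · exact ⟨_, _, rfl, h⟩

theorem mem_used_or_exists_apply_eq_self (hmono : Monotone J) {k : ℕ} (hk : 0 < k)
    {c : ℕ → Perm ℕ} {ε : ℕ → Bool} (hε : Periodic ε k)
    (hred : ∀ i, ε (i + 1) ≠ ε i → c i ≠ 1) {S : ℕ}
    (hS : ∀ i, ⇑(c i) ∈ J S ∧ ⇑(c i)⁻¹ ∈ J S) {p : ℕ → ℕ}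
    (hp : ∀ i, p (i + 1) = c i (sgnPow (perm hJ) (ε i) (p i))) (hper : Periodic p k) :
    p 0 ∈ used J S ∨ ∃ j < 2 * k, c j ≠ 1 ∧ c j (p (j + 1)) = p (j + 1) := by
  set q : ℕ → ℕ := fun i => sgnPow (perm hJ) (ε i) (p i)
  set st : ℕ → ℕ := fun i => stage hJ (ε i) (p i)
  have hp_mem (i : ℕ) : p i ∈ coords J (st i) := by simp [st, coords_stage]
  have hq_mem (i : ℕ) : q i ∈ coords J (st i) := by simp [st, q, coords_stage]
  have hst : Periodic st k := fun j => by simp [st, hε j, hper j]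
  obtain ⟨i, hki, hi, hmax⟩ := hst.exists_forall_le hk
  set ρ := st i
  by_cases hρ : ρ < S
  · exact Or.inl (mem_used.mpr ⟨st 0, (hmax 0).trans_lt hρ, hp_mem 0⟩)
  right
  have hcJ (j : ℕ) : ⇑(c j) ∈ J ρ ∧ ⇑(c j)⁻¹ ∈ J ρ :=
    ⟨hmono (not_lt.mp hρ) (hS j).1, hmono (not_lt.mp hρ) (hS j).2⟩
  obtain ⟨y, z, hyz, hy⟩ := exists_notMem_avoid hJ ρ
  have hy_used : y ∉ used J ρ := fun h => notMem_of_notMem_avoid hy (mem_insert_of_mem h)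
  have hy_step : y = p i ∨ y = q i := by
    have : y ∈ coords J ρ := by simp [hyz]
    simpa [ρ, st, coords_stage] using this
  obtain ⟨j, hj, hqj, hpj, hfix⟩ : ∃ j < 2 * k, q j = y ∧ p (j + 1) = y ∧ c j y = y := by
    rcases hy_step with hpi | hqi
    · obtain ⟨j, rfl⟩ : ∃ j, i = j + 1 := ⟨i - 1, by omega⟩
      have hq : q j = (c j)⁻¹ y := (Perm.inv_eq_iff_eq.mpr (hpi.trans (hp j))).symm
      have h := apply_eq_self_of_notMem_avoid hyz hy (g := (c j)⁻¹) (by simpa using (hcJ j).1)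
        (hq ▸ hq_mem j) (hmax j)
      exact ⟨j, by omega, hq.trans h, hpi.symm, (Perm.inv_eq_iff_eq.mp h).symm⟩
    · have h := apply_eq_self_of_notMem_avoid hyz hy (hcJ i).2
        (by rw [hqi, ← hp]; exact hp_mem (i + 1)) (hmax (i + 1))
      exact ⟨i, hi, hqi.symm, (hp i).trans (hqi ▸ h), h⟩
  refine ⟨j, hj, fun h1 => ?_, by rw [hpj, hfix]⟩
  have hεj : ε (j + 1) = ε j := not_not.mp fun h => hred j h h1
  have e₁ : st j = ρ := stage_eq_of_notMem_used (hqj ▸ hq_mem j) (hmax j) hy_used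
  have e₂ : st (j + 1) = ρ := stage_eq_of_notMem_used (hpj ▸ hp_mem (j + 1)) (hmax _) hy_used
  apply stage_sgnPow_ne hJ (ε j) (p j)
  change stage hJ (ε j) (q j) = st j
  rw [e₁, ← e₂, hqj, ← hpj, ← hεj]

theorem finite_fixedBy_wordProd (hmono : Monotone J) {G : Subgroup (Perm ℕ)} (hG : Cofinitary G)
    (hGJ : ∀ g ∈ G, ∃ n, ⇑g ∈ J n) {k : ℕ} {c : ℕ → Perm ℕ} {ε : ℕ → Bool}
    (hw : IsCyclicallyReducedWord G k c ε) : (fixedBy ℕ (wordProd (perm hJ) c ε k)).Finite := by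
  obtain ⟨S, hS⟩ := exists_forall_mem_of_periodic hmono hGJ hw.pos hw.periodic_c hw.mem
  set W := wordProd (perm hJ) c ε
  have hfin (j : ℕ) : {x | c j ≠ 1 ∧ c j (W (j + 1) x) = W (j + 1) x}.Finite := by
    by_cases h1 : c j = 1
    · simp [h1]
    · exact ((hG _ (hw.mem j) h1).preimage (W (j + 1)).injective.injOn).subset fun x hx => hx.2
  refine ((used J S).finite_toSet.union
    ((range (2 * k)).finite_toSet.biUnion fun j _ => hfin j)).subset fun x hx => ?_
  have hper : Periodic (fun i => W i x) k := fun i => by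
    simp only [W, wordProd_add_of_periodic hw.periodic_c hw.periodic_ε, Perm.mul_apply]
    rw [show wordProd (perm hJ) c ε k x = x from hx]
  rcases mem_used_or_exists_apply_eq_self hJ hmono hw.pos hw.periodic_ε hw.ne_one hS
    (p := fun i => W i x) (fun i => rfl) hper with h | ⟨j, hj, h⟩
  · exact Or.inl h
  · exact Or.inr (Set.mem_biUnion (mem_range.mpr hj) h)

end StagedPerm

theorem stmt16 (G : Subgroup (Equiv.Perm ℕ)) (hG : Cofinitary G)
    (K : ℕ → Set (ℕ → ℕ)) (hK : ∀ n, IsCompact (K n))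
    (hsub : ∀ g ∈ G, ⇑g ∈ ⋃ n, K n) :
    ∃ H : Subgroup (Equiv.Perm ℕ), Cofinitary H ∧ G < H := by
  have hJ := isCompact_accumulate hK
  have hGJ (g : Equiv.Perm ℕ) (hg : g ∈ G) : ∃ n, ⇑g ∈ Set.accumulate K n := by
    obtain ⟨n, hn⟩ := Set.mem_iUnion.mp (hsub g hg)
    exact ⟨n, Set.subset_accumulate hn⟩
  set σ := StagedPerm.perm hJ
  have hσ : σ ∉ G := fun h => by
    obtain ⟨n, hn⟩ := hGJ σ h
    exact StagedPerm.perm_notMem hJ Set.monotone_accumulate n hn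
  refine ⟨closure (insert σ G), ?_, ?_⟩
  · exact hG.closure_insert σ fun k c ε hw =>
      StagedPerm.finite_fixedBy_wordProd hJ Set.monotone_accumulate hG hGJ hw
  · refine SetLike.lt_iff_le_and_exists.mpr ⟨fun g hg => ?_, σ, ?_, hσ⟩
    · exact subset_closure (Or.inr hg)
    · exact subset_closure (Or.inl rfl)
end
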